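/- arXiv:2407.01783 — 5 statements merged into one kernel-verified Lean document; each statement's English description precedes it below -/
import Mathlib

section
/- Let A be symmetric positive definite, B have full row rank, and M be symmetric positive definite (the pressure mass matrix). For λ ≥ 0 define A_λ = A + λ B^T M^{-1} B and S_λ = B A_λ^{-1} B^T. Then S_λ^{-1} = λ M^{-1} + (B A^{-1} B^T)^{-1}. -/
/-!
The identity is algebraic. For invertible `A` and `S = B A⁻¹ C` one has
`C (N + S⁻¹) = (A + C N B) A⁻¹ C S⁻¹`, so multiplying on the left by `B (A + C N B)⁻¹` shows that
`N + S⁻¹` is a right inverse of `B (A + C N B)⁻¹ C`. Here `C = Bᵀ` and `N = λ M⁻¹`; positive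
definiteness of `A`, of `A_λ = A + Bᵀ (λ M⁻¹) B` and, by full row rank of `B`, of `S` supplies the
invertibility.
-/

open Matrix

namespace Matrix

theorem vecMul_injective_of_rank_eq_card {K : Type*} [Field K] {m n : Type*} [Fintype m]
    [Fintype n] {B : Matrix m n K} (hB : B.rank = Fintype.card m) :
    Function.Injective B.vecMul :=
  vecMul_injective_iff.mpr <| linearIndependent_iff_card_eq_finrank_span.mpr <| by
    rw [Set.finrank, ← rank_eq_finrank_span_row, hB]

theorem inv_mul_inv_add_mul_mul_mul {R : Type*} [CommRing R] {m n : Type*} [Fintype m]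
    [Fintype n] [DecidableEq m] [DecidableEq n] {A : Matrix n n R} {B : Matrix m n R}
    {C : Matrix n m R} (N : Matrix m m R) (hA : IsUnit A.det) (hS : IsUnit (B * A⁻¹ * C).det)
    (hAN : IsUnit (A + C * N * B).det) :
    (B * (A + C * N * B)⁻¹ * C)⁻¹ = N + (B * A⁻¹ * C)⁻¹ := by
  set S := B * A⁻¹ * C
  have hSS : B * (A⁻¹ * (C * S⁻¹)) = 1 := by
    rw [← Matrix.mul_assoc, ← Matrix.mul_assoc]
    exact mul_nonsing_inv S hS
  have key : C * (N + S⁻¹) = (A + C * N * B) * (A⁻¹ * C * S⁻¹) := by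
    simp only [Matrix.add_mul, Matrix.mul_add, Matrix.mul_assoc,
      mul_nonsing_inv_cancel_left _ _ hA, hSS, Matrix.mul_one]
    exact add_comm _ _
  refine inv_eq_right_inv ?_
  calc B * (A + C * N * B)⁻¹ * C * (N + S⁻¹)
      = B * ((A + C * N * B)⁻¹ * (A + C * N * B)) * (A⁻¹ * C * S⁻¹) := by
        rw [Matrix.mul_assoc _ C, key]
        simp only [Matrix.mul_assoc]
    _ = S * S⁻¹ := by
        rw [nonsing_inv_mul _ hAN, Matrix.mul_one]
        simp only [S, Matrix.mul_assoc]
    _ = 1 := mul_nonsing_inv S hS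

end Matrix

/-- Augmented Lagrangian identity: with `A` SPD, `B` of full row rank, `M` SPD and `λ ≥ 0`,
setting `A_λ = A + λ Bᵀ M⁻¹ B` and `S_λ = B A_λ⁻¹ Bᵀ`, one has
`S_λ⁻¹ = λ M⁻¹ + (B A⁻¹ Bᵀ)⁻¹`. -/
theorem augmented_lagrangian_schur_inverse {n m : ℕ}
    (A : Matrix (Fin n) (Fin n) ℝ) (B : Matrix (Fin m) (Fin n) ℝ)
    (M : Matrix (Fin m) (Fin m) ℝ)
    (hA : A.PosDef) (hB : B.rank = m) (hM : M.PosDef)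
    (l : ℝ) (hl : 0 ≤ l) :
    (B * (A + l • (Bᵀ * M⁻¹ * B))⁻¹ * Bᵀ)⁻¹ = l • M⁻¹ + (B * A⁻¹ * Bᵀ)⁻¹ := by
  have hBinj := vecMul_injective_of_rank_eq_card (hB.trans (Fintype.card_fin m).symm)
  have hS : (B * A⁻¹ * Bᵀ).PosDef := by
    simpa only [conjTranspose_eq_transpose_of_trivial]
      using hA.inv.mul_mul_conjTranspose_same hBinj
  have hAl : (A + Bᵀ * (l • M⁻¹) * B).PosDef := by
    refine hA.add_posSemidef ?_
    simpa only [conjTranspose_eq_transpose_of_trivial]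
      using (hM.inv.posSemidef.smul hl).conjTranspose_mul_mul_same B
  rw [← Matrix.smul_mul l (Bᵀ * M⁻¹), ← Matrix.mul_smul]
  exact inv_mul_inv_add_mul_mul_mul _ ((isUnit_iff_isUnit_det A).mp hA.isUnit)
    ((isUnit_iff_isUnit_det _).mp hS.isUnit) ((isUnit_iff_isUnit_det _).mp hAl.isUnit)
end

section
/- With the notation of the augmented Lagrangian identity, if s_♭ and s_♯ are the smallest and largest eigenvalues of M^{-1/2} S M^{-1/2} where S = B A^{-1} B^T, then every eigenvalue μ of M^{-1} S_λ satisfies (λ + s_♭^{-1})^{-1} ≤ μ ≤ (λ + s_♯^{-1})^{-1}. -/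
/-! A Woodbury-type computation gives `S_λ (S⁻¹ + λ M⁻¹) = 1`. Conjugating by `W = M^{-1/2}`
turns this into `W S_λ W = (λ + (W S W)⁻¹)⁻¹`, and `M⁻¹ S_λ = W (W S_λ W) W⁻¹` is similar to
`W S_λ W`. Hence the eigenvalues of `M⁻¹ S_λ` are the numbers `(λ + t⁻¹)⁻¹` with `t ∈ [s♭, s♯]` an
eigenvalue of `W S W`, and `t ↦ (λ + t⁻¹)⁻¹` is increasing for `t > 0`. -/

open Matrix

section
open scoped ComplexOrder

/-- The positive semidefinite square root of a positive semidefinite matrix, as defined in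
Mathlib (December 2024) under the name `Matrix.PosSemidef.sqrt` (since removed). -/
noncomputable def Matrix.PosSemidef.sqrt {n 𝕜 : Type*} [Fintype n] [DecidableEq n] [RCLike 𝕜]
    {A : Matrix n n 𝕜} (hA : A.PosSemidef) : Matrix n n 𝕜 :=
  hA.1.eigenvectorUnitary.1 * diagonal ((↑) ∘ (√·) ∘ hA.1.eigenvalues) *
  (star hA.1.eigenvectorUnitary : Matrix n n 𝕜)

end

namespace Matrix

variable {n m 𝕜 K R : Type*} [Fintype n] [DecidableEq n] [Fintype m] [DecidableEq m]

open scoped ComplexOrder in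
theorem PosSemidef.sqrt_mul_self [RCLike 𝕜] {X : Matrix n n 𝕜} (hX : X.PosSemidef) :
    hX.sqrt * hX.sqrt = X := by
  have hU : (star hX.1.eigenvectorUnitary : Matrix n n 𝕜) * hX.1.eigenvectorUnitary = 1 :=
    Unitary.star_mul_self_of_mem hX.1.eigenvectorUnitary.2
  conv_rhs => rw [hX.1.spectral_theorem, Unitary.conjStarAlgAut_apply]
  unfold PosSemidef.sqrt
  simp only [Matrix.mul_assoc]
  rw [← Matrix.mul_assoc (star _) _ (diagonal _ * _), hU, Matrix.one_mul,
    ← Matrix.mul_assoc (diagonal _) (diagonal _), diagonal_mul_diagonal]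
  congr 3
  funext i
  simp [← RCLike.ofReal_mul, Real.mul_self_sqrt (hX.eigenvalues_nonneg i)]

section CommRing

variable [CommRing R]

theorem mul_inv_add_mul_mul_mul_mul_inv_add_eq_one {A : Matrix n n R} {B : Matrix m n R}
    {C : Matrix n m R} {N : Matrix m m R} (hA : IsUnit A) (hAN : IsUnit (A + C * N * B))
    (hS : IsUnit (B * A⁻¹ * C)) :
    B * (A + C * N * B)⁻¹ * C * ((B * A⁻¹ * C)⁻¹ + N) = 1 := by
  rw [isUnit_iff_isUnit_det] at hA hAN hS
  generalize hSdef : B * A⁻¹ * C = S at hS ⊢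
  have hAinvC : A⁻¹ * C = (A + C * N * B)⁻¹ * (C * ((S⁻¹ + N) * S)) := by
    have hAinvC_mul : (A + C * N * B) * (A⁻¹ * C) = C * ((S⁻¹ + N) * S) := by
      rw [Matrix.add_mul, Matrix.add_mul, nonsing_inv_mul _ hS, mul_nonsing_inv_cancel_left _ _ hA,
        Matrix.mul_add, Matrix.mul_one, ← hSdef]
      simp only [Matrix.mul_assoc]
    rw [← hAinvC_mul, nonsing_inv_mul_cancel_left _ _ hAN]
  calc B * (A + C * N * B)⁻¹ * C * (S⁻¹ + N)
      = B * ((A + C * N * B)⁻¹ * (C * ((S⁻¹ + N) * S))) * S⁻¹ := by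
        simp only [Matrix.mul_assoc, mul_nonsing_inv _ hS, Matrix.mul_one]
    _ = S * S⁻¹ := by rw [← hAinvC, ← Matrix.mul_assoc, hSdef]
    _ = 1 := mul_nonsing_inv _ hS

theorem mul_mul_mul_algebraMap_add_inv_eq_one {W X S : Matrix m m R} {l : R} (hW : IsUnit W)
    (hX : X * (S⁻¹ + l • (W * W)) = 1) :
    W * X * W * (algebraMap R _ l + (W * S * W)⁻¹) = 1 := by
  rw [isUnit_iff_isUnit_det] at hW
  calc W * X * W * (algebraMap R _ l + (W * S * W)⁻¹)
      = W * (X * (S⁻¹ + l • (W * W))) * W⁻¹ := by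
        rw [Matrix.mul_inv_rev, Matrix.mul_inv_rev, Algebra.algebraMap_eq_smul_one]
        simp only [Matrix.mul_add, Matrix.add_mul, Matrix.mul_assoc, Matrix.mul_smul,
          Matrix.smul_mul, Matrix.mul_one, mul_nonsing_inv_cancel_left _ _ hW,
          mul_nonsing_inv _ hW]
        rw [add_comm]
    _ = 1 := by rw [hX, Matrix.mul_one, mul_nonsing_inv _ hW]

end CommRing

section Field

variable [Field K]

theorem spectrum_eq_inv_of_mul_eq_one {X Y : Matrix m m K} (h : X * Y = 1) :
    spectrum K X = (spectrum K Y)⁻¹ := by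
  obtain ⟨u, rfl⟩ : IsUnit Y := .of_mul_eq_one_right X h
  rw [spectrum.map_inv, ← Units.inv_eq_of_mul_eq_one_left h]

theorem spectrum_eq_image_of_mul_algebraMap_add_inv_eq_one {T P : Matrix m m K} {l : K}
    (hT : IsUnit T) (hP : P * (algebraMap K _ l + T⁻¹) = 1) :
    spectrum K P = (fun t ↦ (l + t⁻¹)⁻¹) '' spectrum K T := by
  obtain ⟨u, rfl⟩ := hT
  rw [spectrum_eq_inv_of_mul_eq_one hP, ← spectrum.singleton_add_eq, ← coe_units_inv,
    ← spectrum.map_inv, Set.singleton_add, ← Set.image_inv_eq_inv, ← Set.image_inv_eq_inv,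
    Set.image_image, Set.image_image]

end Field

end Matrix

theorem spectrum.units_mul_comm {R A : Type*} [CommSemiring R] [Ring A] [Algebra R A] (u : Aˣ)
    (a : A) : spectrum R (u * a) = spectrum R (a * u) := by
  simpa [mul_assoc] using spectrum.units_conjugate (R := R) (a := a * u) (u := u)

theorem inv_add_inv_le_inv_add_inv {α : Type*} [Field α] [LinearOrder α] [IsStrictOrderedRing α]
    {l a b : α} (hl : 0 ≤ l) (ha : 0 < a) (hab : a ≤ b) :
    (l + a⁻¹)⁻¹ ≤ (l + b⁻¹)⁻¹ := by
  have hb := ha.trans_le hab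
  gcongr

theorem augmented_lagrangian_schur_spectrum_general {n m : ℕ}
    (A : Matrix (Fin n) (Fin n) ℝ) (B : Matrix (Fin m) (Fin n) ℝ)
    (M : Matrix (Fin m) (Fin m) ℝ)
    (hA : A.PosDef)
    (l : ℝ) (hl : 0 ≤ l)
    -- `W = M^{-1/2}`, the positive semidefinite square root of `M⁻¹`
    (W : Matrix (Fin m) (Fin m) ℝ) (hMinv : (M⁻¹).PosSemidef) (hW : W = hMinv.sqrt)
    -- `S = B A⁻¹ Bᵀ`
    (S : Matrix (Fin m) (Fin m) ℝ) (hS : S = B * A⁻¹ * Bᵀ)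
    -- `s♭`, `s♯` are the smallest and largest eigenvalues of `W * S * W`
    (hWSW : (W * S * W).IsHermitian)
    (sb ss : ℝ)
    (hsb_le : ∀ i, sb ≤ hWSW.eigenvalues i)
    (hss_le : ∀ i, hWSW.eigenvalues i ≤ ss)
    (hsb_pos : 0 < sb)
    -- `S_λ = B A_λ⁻¹ Bᵀ`
    (Sl : Matrix (Fin m) (Fin m) ℝ) (hSl : Sl = B * (A + l • (Bᵀ * M⁻¹ * B))⁻¹ * Bᵀ) :
    ∀ μ ∈ spectrum ℝ (M⁻¹ * Sl), (l + sb⁻¹)⁻¹ ≤ μ ∧ μ ≤ (l + ss⁻¹)⁻¹ := by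
  have hWW : W * W = M⁻¹ := hW ▸ hMinv.sqrt_mul_self
  have hT : IsUnit (W * S * W) :=
    (hWSW.posDef_iff_eigenvalues_pos.mpr fun i ↦ hsb_pos.trans_le (hsb_le i)).isUnit
  obtain ⟨hWunit, hSunit⟩ := IsUnit.mul_iff.mp (IsUnit.mul_iff.mp hT).1
  have hAl : IsUnit (A + Bᵀ * (l • M⁻¹) * B) := by
    rw [Matrix.mul_smul, Matrix.smul_mul]
    refine (hA.add_posSemidef (PosSemidef.smul ?_ hl)).isUnit
    simpa using hMinv.conjTranspose_mul_mul_same B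
  have hSchur : Sl * (S⁻¹ + l • (W * W)) = 1 := by
    rw [hWW, hSl, hS, ← Matrix.smul_mul, ← Matrix.mul_smul]
    exact mul_inv_add_mul_mul_mul_mul_inv_add_eq_one hA.isUnit hAl (hS ▸ hSunit)
  intro μ hμ
  rw [← hWW, Matrix.mul_assoc, ← hWunit.unit_spec, spectrum.units_mul_comm, hWunit.unit_spec,
    spectrum_eq_image_of_mul_algebraMap_add_inv_eq_one hT
      (mul_mul_mul_algebraMap_add_inv_eq_one hWunit hSchur),
    hWSW.spectrum_real_eq_range_eigenvalues] at hμ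
  obtain ⟨_, ⟨i, rfl⟩, rfl⟩ := hμ
  exact ⟨inv_add_inv_le_inv_add_inv hl hsb_pos (hsb_le i),
    inv_add_inv_le_inv_add_inv hl (hsb_pos.trans_le (hsb_le i)) (hss_le i)⟩

/-- Spectral bounds for the augmented Lagrangian Schur complement: if `s♭` and `s♯` are the
smallest and largest eigenvalues of `M^{-1/2} S M^{-1/2}` where `S = B A⁻¹ Bᵀ`, then every
eigenvalue `μ` of `M⁻¹ S_λ` (equivalently of `M^{-1/2} S_λ M^{-1/2}`) satisfies
`(λ + s♭⁻¹)⁻¹ ≤ μ ≤ (λ + s♯⁻¹)⁻¹`. -/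
theorem augmented_lagrangian_schur_spectrum {n m : ℕ}
    (A : Matrix (Fin n) (Fin n) ℝ) (B : Matrix (Fin m) (Fin n) ℝ)
    (M : Matrix (Fin m) (Fin m) ℝ)
    (hA : A.PosDef) (hB : B.rank = m) (hM : M.PosDef)
    (l : ℝ) (hl : 0 ≤ l)
    -- `W = M^{-1/2}`, the positive semidefinite square root of `M⁻¹`
    (W : Matrix (Fin m) (Fin m) ℝ) (hMinv : (M⁻¹).PosSemidef) (hW : W = hMinv.sqrt)
    -- `S = B A⁻¹ Bᵀ`
    (S : Matrix (Fin m) (Fin m) ℝ) (hS : S = B * A⁻¹ * Bᵀ)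
    -- `s♭`, `s♯` are the smallest and largest eigenvalues of `W * S * W`
    (hWSW : (W * S * W).IsHermitian)
    (sb ss : ℝ)
    (hsb_le : ∀ i, sb ≤ hWSW.eigenvalues i) (hsb_mem : ∃ i, hWSW.eigenvalues i = sb)
    (hss_le : ∀ i, hWSW.eigenvalues i ≤ ss) (hss_mem : ∃ i, hWSW.eigenvalues i = ss)
    (hsb_pos : 0 < sb)
    -- `S_λ = B A_λ⁻¹ Bᵀ`
    (Sl : Matrix (Fin m) (Fin m) ℝ) (hSl : Sl = B * (A + l • (Bᵀ * M⁻¹ * B))⁻¹ * Bᵀ) :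
    ∀ μ ∈ spectrum ℝ (M⁻¹ * Sl), (l + sb⁻¹)⁻¹ ≤ μ ∧ μ ≤ (l + ss⁻¹)⁻¹ :=
  augmented_lagrangian_schur_spectrum_general A B M hA l hl W hMinv hW S hS hWSW sb ss hsb_le hss_le
    hsb_pos Sl hSl
end

section
/- In the setting above, the spectral condition number of M^{-1/2} S_λ M^{-1/2} equals (λ s_♭ + 1) s_♯ / ((λ s_♯ + 1) s_♭), which is decreasing in λ and tends to 1 as λ → ∞. -/
/-! With `T = W S W`, the push-through identity `B (A + Bᵀ N B)⁻¹ Bᵀ = ((B A⁻¹ Bᵀ)⁻¹ + N)⁻¹`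
and `W² = M⁻¹` give `W S_λ W = (T⁻¹ + λ)⁻¹`. By spectral mapping, the spectrum of `W S_λ W` is
the image of that of `T` under the increasing map `x ↦ (x⁻¹ + λ)⁻¹`, so its extreme points are
the images of `s♭` and `s♯`. The resulting ratio is `1 + (s♯ - s♭) / ((λ s♯ + 1) s♭)`. -/

open Matrix Filter

namespace Matrix

section Inverse

variable {α : Type*} [CommRing α] {m n : Type*} [Fintype m] [Fintype n] [DecidableEq m]
  [DecidableEq n]

theorem mul_inv_add_mul_mul_mul_eq_inv_add {A : Matrix n n α} {B : Matrix m n α}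
    {C : Matrix n m α} (N : Matrix m m α) (hA : IsUnit A.det)
    (hAN : IsUnit (A + C * N * B).det) (hK : IsUnit (B * A⁻¹ * C).det) :
    B * (A + C * N * B)⁻¹ * C = ((B * A⁻¹ * C)⁻¹ + N)⁻¹ := by
  set K := B * A⁻¹ * C
  have hpush : (A + C * N * B) * (A⁻¹ * C) = C * (1 + N * K) := by
    rw [Matrix.add_mul, mul_nonsing_inv_cancel_left _ _ hA, Matrix.mul_add, Matrix.mul_one]
    simp only [K, Matrix.mul_assoc]
  have hK_eq : K = B * (A + C * N * B)⁻¹ * C * (1 + N * K) := by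
    rw [Matrix.mul_assoc _ C, ← hpush, Matrix.mul_assoc B, nonsing_inv_mul_cancel_left _ _ hAN,
      ← Matrix.mul_assoc]
  refine (inv_eq_left_inv ?_).symm
  calc B * (A + C * N * B)⁻¹ * C * (K⁻¹ + N)
      = B * (A + C * N * B)⁻¹ * C * (1 + N * K) * K⁻¹ := by
        rw [Matrix.mul_assoc _ (1 + N * K), add_mul, one_mul, Matrix.mul_assoc N,
          mul_nonsing_inv _ hK, mul_one, add_comm]
    _ = 1 := by rw [← hK_eq, mul_nonsing_inv _ hK]

theorem mul_inv_add_smul_mul_self_mul {W : Matrix n n α} (hW : IsUnit W.det)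
    (X : Matrix n n α) (r : α) :
    W * (X + r • (W * W))⁻¹ * W = (W⁻¹ * X * W⁻¹ + r • 1)⁻¹ := by
  have hconj : W⁻¹ * X * W⁻¹ + r • 1 = W⁻¹ * (X + r • (W * W)) * W⁻¹ := by
    rw [mul_add, add_mul, mul_smul_comm, smul_mul_assoc, ← Matrix.mul_assoc,
      nonsing_inv_mul _ hW, one_mul, mul_nonsing_inv _ hW]
  rw [hconj, mul_inv_rev, mul_inv_rev, nonsing_inv_nonsing_inv _ hW, Matrix.mul_assoc]

end Inverse

section Spectrum

variable {𝕜 n : Type*} [Field 𝕜] [Fintype n] [DecidableEq n]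

theorem spectrum_nonsing_inv {A : Matrix n n 𝕜} (hA : IsUnit A) :
    spectrum 𝕜 A⁻¹ = (spectrum 𝕜 A)⁻¹ := by
  rw [← hA.unit_spec, ← coe_units_inv, spectrum.map_inv]

theorem spectrum_inv_add_smul_one_inv {A : Matrix n n 𝕜} (hA : IsUnit A) {r : 𝕜}
    (hr : ∀ x ∈ spectrum 𝕜 A, x⁻¹ + r ≠ 0) :
    spectrum 𝕜 (A⁻¹ + r • 1)⁻¹ = (fun x => (x⁻¹ + r)⁻¹) '' spectrum 𝕜 A := by
  have hshift : spectrum 𝕜 (A⁻¹ + r • 1) = (fun x => x⁻¹ + r) '' spectrum 𝕜 A := by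
    rw [← Algebra.algebraMap_eq_smul_one (A := Matrix n n 𝕜) r, ← spectrum.add_singleton_eq,
      spectrum_nonsing_inv hA, Set.add_singleton, ← Set.image_inv_eq_inv, Set.image_image]
  have hunit : IsUnit (A⁻¹ + r • 1) :=
    spectrum.isUnit_of_zero_notMem (R := 𝕜) <| hshift ▸ fun ⟨x, hx, hx0⟩ => hr x hx hx0
  rw [spectrum_nonsing_inv hunit, hshift, ← Set.image_inv_eq_inv, Set.image_image]

end Spectrum

theorem PosSemidef.cfc_sqrt_mul_self {n : Type*} [Fintype n] [DecidableEq n]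
    {N : Matrix n n ℝ} (hN : N.PosSemidef) : hN.1.cfc Real.sqrt * hN.1.cfc Real.sqrt = N := by
  have hspec : ∀ x ∈ spectrum ℝ N, 0 ≤ x := by
    rw [hN.1.spectrum_real_eq_range_eigenvalues]
    rintro - ⟨i, rfl⟩
    exact hN.eigenvalues_nonneg i
  rw [← hN.1.cfc_eq, ← cfc_mul ..]
  exact (cfc_congr fun x hx => Real.mul_self_sqrt (hspec x hx)).trans (cfc_id' ℝ N hN.1)

end Matrix

section AugmentedLagrangian

variable {m n : Type*} [Fintype m] [Fintype n] [DecidableEq m] [DecidableEq n]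

theorem augmented_schur_conj_eq_inv_add_smul_one {A : Matrix n n ℝ} (hA : A.PosDef)
    (B : Matrix m n ℝ)
    {N W : Matrix m m ℝ} (hN : N.PosSemidef) (hW : W * W = N)
    (hT : IsUnit (W * (B * A⁻¹ * Bᵀ) * W).det) {l : ℝ} (hl : 0 ≤ l) :
    W * (B * (A + l • (Bᵀ * N * B))⁻¹ * Bᵀ) * W = ((W * (B * A⁻¹ * Bᵀ) * W)⁻¹ + l • 1)⁻¹ := by
  rw [det_mul, det_mul] at hT
  have hWu : IsUnit W.det := isUnit_of_mul_isUnit_right hT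
  have hSu : IsUnit (B * A⁻¹ * Bᵀ).det :=
    isUnit_of_mul_isUnit_right (isUnit_of_mul_isUnit_left hT)
  have hAl : (A + Bᵀ * (l • N) * B).PosDef := by
    refine hA.add_posSemidef ?_
    simpa only [conjTranspose_eq_transpose_of_trivial] using
      (hN.smul hl).conjTranspose_mul_mul_same B
  rw [show l • (Bᵀ * N * B) = Bᵀ * (l • N) * B by simp, mul_inv_add_mul_mul_mul_eq_inv_add _
    ((isUnit_iff_isUnit_det A).mp hA.isUnit) ((isUnit_iff_isUnit_det _).mp hAl.isUnit) hSu,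
    ← hW, mul_inv_add_smul_mul_self_mul hWu, Matrix.mul_inv_rev (W * _), Matrix.mul_inv_rev W,
    Matrix.mul_assoc W⁻¹]

end AugmentedLagrangian

theorem Real.nonempty_of_pos_sInf {s : Set ℝ} (h : 0 < sInf s) : s.Nonempty :=
  Set.nonempty_iff_ne_empty.mpr fun hs => by simp [hs] at h

theorem Set.Finite.isLeast_csInf {α : Type*} [ConditionallyCompleteLinearOrder α] {s : Set α}
    (hs : s.Finite) (hne : s.Nonempty) : IsLeast s (sInf s) :=
  ⟨hne.csInf_mem hs, fun _ hx => csInf_le hs.bddBelow hx⟩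

theorem Set.Finite.isGreatest_csSup {α : Type*} [ConditionallyCompleteLinearOrder α] {s : Set α}
    (hs : s.Finite) (hne : s.Nonempty) : IsGreatest s (sSup s) :=
  ⟨hne.csSup_mem hs, fun _ hx => le_csSup hs.bddAbove hx⟩

theorem monotoneOn_inv_inv_add {l : ℝ} (hl : 0 ≤ l) :
    MonotoneOn (fun x : ℝ => (x⁻¹ + l)⁻¹) (Set.Ioi 0) := by
  intro x hx y hy hxy
  have hy : 0 < y := hy
  exact inv_anti₀ (by positivity) (by gcongr)

theorem sSup_div_sInf_image_inv_inv_add {s : Set ℝ} {a b l : ℝ} (hl : 0 ≤ l)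
    (ha : IsLeast s a) (hb : IsGreatest s b) (ha_pos : 0 < a) :
    sSup ((fun x => (x⁻¹ + l)⁻¹) '' s) / sInf ((fun x => (x⁻¹ + l)⁻¹) '' s) =
      (l * a + 1) * b / ((l * b + 1) * a) := by
  have hmono := (monotoneOn_inv_inv_add hl).mono fun x hx => ha_pos.trans_le (ha.2 hx)
  have hb_pos : 0 < b := ha_pos.trans_le (ha.2 hb.1)
  rw [(hmono.map_isGreatest hb).csSup_eq, (hmono.map_isLeast ha).csInf_eq]
  field_simp
  ring

theorem condition_ratio_eq_one_add {a b l : ℝ} (ha : 0 < a) (hb : 0 < b) (hl : 0 ≤ l) :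
    (l * a + 1) * b / ((l * b + 1) * a) = 1 + (b - a) / ((l * b + 1) * a) := by
  field_simp
  ring

theorem antitoneOn_condition_ratio {a b : ℝ} (ha : 0 < a) (hab : a ≤ b) :
    AntitoneOn (fun l => (l * a + 1) * b / ((l * b + 1) * a)) (Set.Ici 0) := by
  intro x hx y hy hxy
  have hb : 0 < b := ha.trans_le hab
  have hx : 0 ≤ x := hx
  have hba : 0 ≤ b - a := sub_nonneg.mpr hab
  simp only [condition_ratio_eq_one_add ha hb hx, condition_ratio_eq_one_add ha hb (hx.trans hxy)]
  gcongr

theorem tendsto_condition_ratio {a b : ℝ} (ha : 0 < a) (hb : 0 < b) :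
    Tendsto (fun l => (l * a + 1) * b / ((l * b + 1) * a)) atTop (nhds 1) := by
  have hden : Tendsto (fun l => (l * b + 1) * a) atTop atTop :=
    (tendsto_atTop_add_const_right _ 1 (tendsto_id.atTop_mul_const hb)).atTop_mul_const ha
  have hlim : Tendsto (fun l => 1 + (b - a) / ((l * b + 1) * a)) atTop (nhds 1) := by
    simpa using tendsto_const_nhds.add ((tendsto_const_nhds (x := b - a)).div_atTop hden)
  refine hlim.congr' ?_
  filter_upwards [eventually_ge_atTop 0] with l hl
  exact (condition_ratio_eq_one_add ha hb hl).symm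

theorem augmented_lagrangian_condition_number_general {n m : ℕ}
    (A : Matrix (Fin n) (Fin n) ℝ) (B : Matrix (Fin m) (Fin n) ℝ)
    (M : Matrix (Fin m) (Fin m) ℝ)
    (hA : A.PosDef)
    -- `W = M^{-1/2}`, the positive semidefinite square root of `M⁻¹`
    (W : Matrix (Fin m) (Fin m) ℝ) (hMinv : (M⁻¹).PosSemidef) (hW : W = (hMinv.1.eigenvectorUnitary : Matrix (Fin m) (Fin m) ℝ) *
      diagonal (Real.sqrt ∘ hMinv.1.eigenvalues) *
      (star hMinv.1.eigenvectorUnitary : Matrix (Fin m) (Fin m) ℝ))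
    -- `S = B A⁻¹ Bᵀ`
    (S : Matrix (Fin m) (Fin m) ℝ) (hS : S = B * A⁻¹ * Bᵀ)
    -- `s♭`, `s♯` are the smallest and largest eigenvalues of `W * S * W`
    (sb ss : ℝ)
    (hsb : sb = sInf (spectrum ℝ (W * S * W))) (hss : ss = sSup (spectrum ℝ (W * S * W)))
    (hsb_pos : 0 < sb) (hsbss : sb ≤ ss)
    -- `S_λ = B A_λ⁻¹ Bᵀ` and `κ(λ)` is the spectral condition number of `W S_λ W`
    (Sl : ℝ → Matrix (Fin m) (Fin m) ℝ)
    (hSl : ∀ l, Sl l = B * (A + l • (Bᵀ * M⁻¹ * B))⁻¹ * Bᵀ)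
    (κ : ℝ → ℝ)
    (hκ : ∀ l, κ l = sSup (spectrum ℝ (W * Sl l * W)) / sInf (spectrum ℝ (W * Sl l * W))) :
    (∀ l, 0 ≤ l → κ l = (l * sb + 1) * ss / ((l * ss + 1) * sb)) ∧
      AntitoneOn κ (Set.Ici 0) ∧
      Tendsto κ atTop (nhds 1) := by
  have hWW : W * W = M⁻¹ := by
    have hWcfc : W = hMinv.1.cfc Real.sqrt := by
      rw [hW, IsHermitian.cfc, Unitary.conjStarAlgAut_apply]
      rfl
    rw [hWcfc, hMinv.cfc_sqrt_mul_self]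
  subst hS
  set T := W * (B * A⁻¹ * Bᵀ) * W
  have hne : (spectrum ℝ T).Nonempty := Real.nonempty_of_pos_sInf (hsb ▸ hsb_pos)
  have hleast : IsLeast (spectrum ℝ T) sb := hsb ▸ T.finite_real_spectrum.isLeast_csInf hne
  have hgreatest : IsGreatest (spectrum ℝ T) ss := hss ▸ T.finite_real_spectrum.isGreatest_csSup hne
  have hpos (x : ℝ) (hx : x ∈ spectrum ℝ T) : 0 < x := hsb_pos.trans_le (hleast.2 hx)
  have hT : IsUnit T := spectrum.isUnit_of_zero_notMem (R := ℝ) fun h0 => (hpos 0 h0).false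
  have hformula (l : ℝ) (hl : 0 ≤ l) : κ l = (l * sb + 1) * ss / ((l * ss + 1) * sb) := by
    have hspec : spectrum ℝ (W * Sl l * W) = (fun x => (x⁻¹ + l)⁻¹) '' spectrum ℝ T := by
      rw [hSl, augmented_schur_conj_eq_inv_add_smul_one hA B hMinv hWW
        ((isUnit_iff_isUnit_det T).mp hT) hl]
      exact spectrum_inv_add_smul_one_inv hT fun x hx => by have := hpos x hx; positivity
    rw [hκ, hspec, sSup_div_sInf_image_inv_inv_add hl hleast hgreatest hsb_pos]
  refine ⟨hformula,
    (antitoneOn_condition_ratio hsb_pos hsbss).congr fun l hl => (hformula l hl).symm,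
    (tendsto_condition_ratio hsb_pos (hsb_pos.trans_le hsbss)).congr' ?_⟩
  filter_upwards [eventually_ge_atTop 0] with l hl
  exact (hformula l hl).symm

/-- Condition number of the augmented Lagrangian Schur complement: with
`S = B A⁻¹ Bᵀ` having extreme generalized eigenvalues `0 < s♭ ≤ s♯` relative to the SPD
matrix `M`, the spectral condition number of `M^{-1/2} S_λ M^{-1/2}` equals
`(λ s♭ + 1) s♯ / ((λ s♯ + 1) s♭)`, which is decreasing in `λ` on `[0,∞)` and tends to `1`
as `λ → ∞`. -/
theorem augmented_lagrangian_condition_number {n m : ℕ}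
    (A : Matrix (Fin n) (Fin n) ℝ) (B : Matrix (Fin m) (Fin n) ℝ)
    (M : Matrix (Fin m) (Fin m) ℝ)
    (hA : A.PosDef) (hB : B.rank = m) (hM : M.PosDef)
    -- `W = M^{-1/2}`, the positive semidefinite square root of `M⁻¹`
    (W : Matrix (Fin m) (Fin m) ℝ) (hMinv : (M⁻¹).PosSemidef) (hW : W = (hMinv.1.eigenvectorUnitary : Matrix (Fin m) (Fin m) ℝ) *
      diagonal (Real.sqrt ∘ hMinv.1.eigenvalues) *
      (star hMinv.1.eigenvectorUnitary : Matrix (Fin m) (Fin m) ℝ))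
    -- `S = B A⁻¹ Bᵀ`
    (S : Matrix (Fin m) (Fin m) ℝ) (hS : S = B * A⁻¹ * Bᵀ)
    -- `s♭`, `s♯` are the smallest and largest eigenvalues of `W * S * W`
    (sb ss : ℝ)
    (hsb : sb = sInf (spectrum ℝ (W * S * W))) (hss : ss = sSup (spectrum ℝ (W * S * W)))
    (hsb_pos : 0 < sb) (hsbss : sb ≤ ss)
    -- `S_λ = B A_λ⁻¹ Bᵀ` and `κ(λ)` is the spectral condition number of `W S_λ W`
    (Sl : ℝ → Matrix (Fin m) (Fin m) ℝ)
    (hSl : ∀ l, Sl l = B * (A + l • (Bᵀ * M⁻¹ * B))⁻¹ * Bᵀ)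
    (κ : ℝ → ℝ)
    (hκ : ∀ l, κ l = sSup (spectrum ℝ (W * Sl l * W)) / sInf (spectrum ℝ (W * Sl l * W))) :
    (∀ l, 0 ≤ l → κ l = (l * sb + 1) * ss / ((l * ss + 1) * sb)) ∧
      AntitoneOn κ (Set.Ici 0) ∧
      Tendsto κ atTop (nhds 1) :=
  augmented_lagrangian_condition_number_general A B M hA W hMinv hW S hS sb ss hsb hss hsb_pos hsbss
    Sl hSl κ hκ
end

section
/- Let V, Q be Hilbert spaces, a : V×V → ℝ a bounded coercive bilinear form, b : V×Q → ℝ a bounded bilinear form satisfying the inf-sup condition with constant β > 0, and f ∈ V'. Then there exists a unique pair (u,p) ∈ V×Q such that a(u,v) − b(v,p) = f(v) for all v ∈ V and b(u,q) = 0 for all q ∈ Q. -/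
/-!
Represent `b` by an operator `T : Q → V` with `⟪T q, v⟫ = b v q`. The inf-sup condition says
`β ‖q‖ ≤ ‖T q‖`, so `T` is injective with closed range `R`, and `Rᗮ` is the kernel of `b`.
Lax–Milgram on `Rᗮ` gives `u`; the residual `a u · - f` vanishes on `Rᗮ`, so its Riesz
representative lies in `Rᗮᗮ = R` and equals `T p`. For uniqueness, coercivity forces the `u`
of a homogeneous solution to vanish, and then injectivity of `T` forces `p = 0`.
-/

open RealInnerProductSpace

theorem exists_inner_eq_of_bilin {E F : Type*} [NormedAddCommGroup E] [InnerProductSpace ℝ E]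
    [CompleteSpace E] [NormedAddCommGroup F] [NormedSpace ℝ F] (B : F →L[ℝ] E →L[ℝ] ℝ) :
    ∃ T : F →L[ℝ] E, ∀ y x, ⟪T y, x⟫ = B y x :=
  ⟨(InnerProductSpace.toDual ℝ E).symm.toContinuousLinearEquiv.toContinuousLinearMap.comp B,
    fun _ _ => by simp⟩

section InfSup

variable {E F : Type*} [NormedAddCommGroup E] [InnerProductSpace ℝ E]
  [NormedAddCommGroup F] [NormedSpace ℝ F]

theorem sSup_inner_image_unitBall_le_norm (w : E) :
    sSup ((fun v : E => ⟪w, v⟫) '' {v : E | ‖v‖ ≤ 1}) ≤ ‖w‖ := by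
  refine Real.sSup_le ?_ (norm_nonneg w)
  rintro _ ⟨v, hv, rfl⟩
  calc ⟪w, v⟫ ≤ ‖w‖ * ‖v‖ := real_inner_le_norm w v
    _ ≤ ‖w‖ := mul_le_of_le_one_right (norm_nonneg w) hv

theorem antilipschitzWith_of_infSup {T : F →L[ℝ] E} {β : ℝ} (hβ : 0 < β)
    (h : ∀ q, β * ‖q‖ ≤ sSup ((fun v : E => ⟪T q, v⟫) '' {v : E | ‖v‖ ≤ 1})) :
    AntilipschitzWith (Real.toNNReal β⁻¹) T := by
  refine T.antilipschitz_of_bound fun q => ?_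
  rw [Real.coe_toNNReal _ (inv_nonneg.2 hβ.le), ← div_eq_inv_mul, le_div_iff₀' hβ]
  exact (h q).trans (sSup_inner_image_unitBall_le_norm (T q))

end InfSup

namespace IsCoercive

theorem bilinearComp_subtypeL {E : Type*} [SeminormedAddCommGroup E] [NormedSpace ℝ E]
    {A : E →L[ℝ] E →L[ℝ] ℝ} (hA : IsCoercive A) (Z : Submodule ℝ E) :
    IsCoercive (A.bilinearComp Z.subtypeL Z.subtypeL) := by
  obtain ⟨C, hC, hAC⟩ := hA
  exact ⟨C, hC, fun z => hAC z⟩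

variable {E : Type*} [NormedAddCommGroup E] [InnerProductSpace ℝ E] {A : E →L[ℝ] E →L[ℝ] ℝ}

theorem exists_forall_apply_eq [CompleteSpace E] (hA : IsCoercive A) (f : StrongDual ℝ E) :
    ∃ u, ∀ v, A u v = f v :=
  ⟨hA.continuousLinearEquivOfBilin.symm ((InnerProductSpace.toDual ℝ E).symm f), fun v => by
    rw [← hA.continuousLinearEquivOfBilin_apply, ContinuousLinearEquiv.apply_symm_apply,
      InnerProductSpace.toDual_symm_apply]⟩

theorem exists_mem_forall_mem_apply_eq (hA : IsCoercive A) (Z : Submodule ℝ E) [CompleteSpace Z]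
    (f : StrongDual ℝ E) : ∃ u ∈ Z, ∀ z ∈ Z, A u z = f z := by
  obtain ⟨u, hu⟩ := (hA.bilinearComp_subtypeL Z).exists_forall_apply_eq (f.comp Z.subtypeL)
  exact ⟨u, u.2, fun z hz => hu ⟨z, hz⟩⟩

end IsCoercive

section SaddlePoint

variable {E Q : Type*} [NormedAddCommGroup E] [InnerProductSpace ℝ E]
  [NormedAddCommGroup Q] [NormedSpace ℝ Q] {A : E →L[ℝ] E →L[ℝ] ℝ} {T : Q →L[ℝ] E}

theorem eq_zero_of_saddle_point_homogeneous (hA : IsCoercive A) (hT : Function.Injective T)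
    {u : E} {p : Q} (h₁ : ∀ v, A u v = ⟪T p, v⟫) (h₂ : ∀ q, ⟪T q, u⟫ = 0) : u = 0 ∧ p = 0 := by
  obtain ⟨C, hC, hAC⟩ := hA
  have hu : u = 0 := by
    have : C * ‖u‖ * ‖u‖ ≤ 0 := (hAC u).trans (by rw [h₁, h₂])
    exact norm_eq_zero.1 <| mul_self_eq_zero.1 <| le_antisymm (by nlinarith) (mul_self_nonneg _)
  have hTp : T p = 0 := ext_inner_right ℝ fun v => by simp [← h₁, hu]
  exact ⟨hu, (map_eq_zero_iff T hT).1 hTp⟩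

variable [CompleteSpace E] [CompleteSpace Q]

theorem exists_saddle_point (hA : IsCoercive A) {K : NNReal} (hT : AntilipschitzWith K T)
    (f : StrongDual ℝ E) :
    ∃ u p, (∀ v, A u v - ⟪T p, v⟫ = f v) ∧ ∀ q, ⟪T q, u⟫ = 0 := by
  set R : Submodule ℝ E := LinearMap.range (T : Q →ₗ[ℝ] E)
  have hR : IsClosed (R : Set E) := by
    rw [LinearMap.coe_range]
    exact hT.isClosed_range T.uniformContinuous
  have : CompleteSpace R := hR.completeSpace_coe
  obtain ⟨u, huR, hu⟩ := hA.exists_mem_forall_mem_apply_eq Rᗮ f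
  set w := (InnerProductSpace.toDual ℝ E).symm (A u - f)
  have hw : ∀ v, ⟪w, v⟫ = A u v - f v := fun v => InnerProductSpace.toDual_symm_apply
  have hwR : w ∈ R := by
    rw [← Submodule.orthogonal_orthogonal R, Submodule.mem_orthogonal']
    intro z hz
    rw [hw, hu z hz, sub_self]
  obtain ⟨p, hp⟩ := hwR
  refine ⟨u, p, fun v => ?_, fun q => (Submodule.mem_orthogonal R u).1 huR _ ⟨q, rfl⟩⟩
  rw [show T p = w from hp, hw, sub_sub_cancel]

theorem existsUnique_saddle_point (hA : IsCoercive A) {K : NNReal} (hT : AntilipschitzWith K T)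
    (f : StrongDual ℝ E) :
    ∃! up : E × Q, (∀ v, A up.1 v - ⟪T up.2, v⟫ = f v) ∧ ∀ q, ⟪T q, up.1⟫ = 0 := by
  obtain ⟨u, p, h₁, h₂⟩ := exists_saddle_point hA hT f
  refine ⟨(u, p), ⟨h₁, h₂⟩, fun ⟨u', p'⟩ ⟨h₁', h₂'⟩ => ?_⟩
  have := eq_zero_of_saddle_point_homogeneous (u := u' - u) (p := p' - p) hA hT.injective
    (fun v => by simp only [map_sub, sub_apply, inner_sub_left]; linarith [h₁ v, h₁' v])
    (fun q => by rw [inner_sub_right, h₂, h₂', sub_zero])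
  simpa [sub_eq_zero] using this

end SaddlePoint

/-- Well-posedness of the abstract saddle point (generalized Stokes) problem: `V`, `Q`
Hilbert spaces, `a` a bounded coercive bilinear form on `V`, `b` a bounded bilinear form on
`V × Q` satisfying the inf-sup condition with constant `β > 0`, and `f ∈ V'`. Then there is
a unique pair `(u, p)` with `a(u,v) − b(v,p) = f(v)` for all `v` and `b(u,q) = 0` for
all `q`. -/
theorem abstract_saddle_point_wellposed
    {V Q : Type*}
    [NormedAddCommGroup V] [InnerProductSpace ℝ V] [CompleteSpace V]
    [NormedAddCommGroup Q] [InnerProductSpace ℝ Q] [CompleteSpace Q]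
    (a : V →ₗ[ℝ] V →ₗ[ℝ] ℝ) (b : V →ₗ[ℝ] Q →ₗ[ℝ] ℝ)
    (Ca : ℝ) (ha_bdd : ∀ v w : V, |a v w| ≤ Ca * ‖v‖ * ‖w‖)
    (α : ℝ) (hα : 0 < α) (ha_coer : ∀ v : V, α * ‖v‖ ^ 2 ≤ a v v)
    (Cb : ℝ) (hb_bdd : ∀ (v : V) (q : Q), |b v q| ≤ Cb * ‖v‖ * ‖q‖)
    (β : ℝ) (hβ : 0 < β)
    (hinfsup : ∀ q : Q, β * ‖q‖ ≤ sSup ((fun v : V => b v q) '' {v : V | ‖v‖ ≤ 1}))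
    (f : V →L[ℝ] ℝ) :
    ∃! up : V × Q, (∀ v : V, a up.1 v - b v up.2 = f v) ∧ (∀ q : Q, b up.1 q = 0) := by
  set A := a.mkContinuous₂ Ca fun v w => by simpa only [Real.norm_eq_abs] using ha_bdd v w
  have hA : IsCoercive A := ⟨α, hα, fun v => by simpa [A, mul_assoc, sq] using ha_coer v⟩
  obtain ⟨T, hT⟩ := exists_inner_eq_of_bilin
    (b.mkContinuous₂ Cb fun v q => by simpa only [Real.norm_eq_abs] using hb_bdd v q).flip
  simp only [ContinuousLinearMap.flip_apply, LinearMap.mkContinuous₂_apply] at hT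
  have hTanti := antilipschitzWith_of_infSup (T := T) hβ (by simpa only [hT] using hinfsup)
  simpa only [A, hT, LinearMap.mkContinuous₂_apply] using existsUnique_saddle_point hA hTanti f
end

section
/- Let A = τ^{-1} M_V + μ E_V where M_V is SPD and E_V is symmetric positive semidefinite, τ, μ > 0. Then S = B A^{-1} B^T satisfies the operator inequalities τ (1 + τ μ λ_max(M_V^{-1}E_V))^{-1} B M_V^{-1} B^T ≼ S ≼ τ B M_V^{-1} B^T in the Loewner order. -/
/-!
In the Loewner order, inversion is antitone on positive definite matrices and conjugation
`X ↦ B X Bᵀ` is monotone. To bound `S = B A⁻¹ Bᵀ` it therefore suffices to sandwich `A`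
between multiples of `M_V`: `τ⁻¹ M_V ≼ A ≼ (τ⁻¹ + μ λ_max) M_V`, where the upper bound is the
Rayleigh-quotient bound `E_V ≼ λ_max M_V`.
-/

open Matrix
open scoped MatrixOrder ComplexOrder

namespace Matrix

variable {n m 𝕜 : Type*} [Fintype n] [RCLike 𝕜]

theorem PosDef.inv_le_inv [DecidableEq n] {M N : Matrix n n 𝕜} (hM : M.PosDef) (h : M ≤ N) :
    N⁻¹ ≤ M⁻¹ := by
  -- The two Schur complements of `[[N, 1], [1, M⁻¹]]` are `N - M` and `M⁻¹ - N⁻¹`.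
  have hN : N.PosDef := by simpa using hM.add_posSemidef (le_iff.mp h)
  have := hM.isUnit.invertible
  have := hN.isUnit.invertible
  have := hM.inv.isUnit.invertible
  have hblock : (fromBlocks N 1 1ᴴ M⁻¹).PosSemidef := by
    rw [PosDef.fromBlocks₂₂ _ _ hM.inv]
    simpa using le_iff.mp h
  rw [PosDef.fromBlocks₁₁ _ _ hN] at hblock
  simpa [le_iff] using hblock

theorem mul_mul_conjTranspose_le_mul_mul_conjTranspose [Fintype m] {M N : Matrix n n 𝕜}
    (h : M ≤ N) (B : Matrix m n 𝕜) : B * M * Bᴴ ≤ B * N * Bᴴ := by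
  rw [le_iff, ← Matrix.sub_mul, ← Matrix.mul_sub]
  exact (le_iff.mp h).mul_mul_conjTranspose_same B

theorem le_smul_of_dotProduct_mulVec_le {M E : Matrix n n ℝ} (hM : M.IsHermitian)
    (hE : E.IsHermitian) {l : ℝ} (h : ∀ x, x ⬝ᵥ E *ᵥ x ≤ l * (x ⬝ᵥ M *ᵥ x)) : E ≤ l • M := by
  refine PosSemidef.of_dotProduct_mulVec_nonneg ((hM.smul (.all l)).sub hE) fun x => ?_
  simpa [sub_mulVec, smul_mulVec, dotProduct_sub] using h x

theorem inv_smul_of_ne_zero [DecidableEq n] {K : Type*} [Field K] {c : K} (hc : c ≠ 0)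
    {M : Matrix n n K} (hM : IsUnit M.det) : (c • M)⁻¹ = c⁻¹ • M⁻¹ := by
  have := invertibleOfNonzero hc
  rw [inv_smul _ _ hM, invOf_eq_inv]

end Matrix

/-- Loewner bounds justifying the small-`τμ` limit in the Cahouet–Chabard preconditioner:
with `A = τ⁻¹ M_V + μ E_V` (`M_V` SPD, `E_V` symmetric PSD, `τ, μ > 0`) and `lmax` the
largest eigenvalue of the pencil `(E_V, M_V)`, the Schur complement `S = B A⁻¹ Bᵀ`
satisfies `τ (1 + τ μ lmax)⁻¹ B M_V⁻¹ Bᵀ ≼ S ≼ τ B M_V⁻¹ Bᵀ`. -/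
theorem schur_loewner_bounds {n m : ℕ}
    (MV EV : Matrix (Fin n) (Fin n) ℝ) (B : Matrix (Fin m) (Fin n) ℝ)
    (hMV : MV.PosDef) (hEV : EV.PosSemidef)
    (τ μ : ℝ) (hτ : 0 < τ) (hμ : 0 < μ)
    -- `lmax` is the largest eigenvalue of the pencil `(E_V, M_V)`:
    (lmax : ℝ) (hlmax0 : 0 ≤ lmax)
    (hlmax : ∀ x : Fin n → ℝ, x ⬝ᵥ EV.mulVec x ≤ lmax * (x ⬝ᵥ MV.mulVec x))
    (A : Matrix (Fin n) (Fin n) ℝ) (hA : A = τ⁻¹ • MV + μ • EV)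
    (S : Matrix (Fin m) (Fin m) ℝ) (hS : S = B * A⁻¹ * Bᵀ) :
    (S - (τ * (1 + τ * μ * lmax)⁻¹) • (B * MV⁻¹ * Bᵀ)).PosSemidef ∧
      (τ • (B * MV⁻¹ * Bᵀ) - S).PosSemidef := by
  have hMVτ : (τ⁻¹ • MV).PosDef := hMV.smul (by positivity)
  have hA_lower : τ⁻¹ • MV ≤ A := by
    rw [hA]
    exact le_add_of_nonneg_right (smul_nonneg hμ.le hEV.nonneg)
  have hA_upper : A ≤ (τ⁻¹ + μ * lmax) • MV := by
    rw [hA, add_smul, mul_smul]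
    gcongr
    exact le_smul_of_dotProduct_mulVec_le hMV.1 hEV.1 hlmax
  have hA_pos : A.PosDef := by simpa using hMVτ.add_posSemidef (le_iff.mp hA_lower)
  have hscale : (τ⁻¹ + μ * lmax)⁻¹ = τ * (1 + τ * μ * lmax)⁻¹ := by
    field_simp
  have hdet := (isUnit_iff_isUnit_det MV).mp hMV.isUnit
  have h_upper := PosDef.inv_le_inv hMVτ hA_lower
  have h_lower := PosDef.inv_le_inv hA_pos hA_upper
  rw [inv_smul_of_ne_zero (by positivity) hdet, inv_inv] at h_upper
  rw [inv_smul_of_ne_zero (by positivity) hdet, hscale] at h_lower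
  rw [hS, ← le_iff, ← le_iff, ← conjTranspose_eq_transpose_of_trivial, ← Matrix.smul_mul,
    ← Matrix.mul_smul, ← Matrix.smul_mul, ← Matrix.mul_smul]
  exact ⟨mul_mul_conjTranspose_le_mul_mul_conjTranspose h_lower B,
    mul_mul_conjTranspose_le_mul_mul_conjTranspose h_upper B⟩
end
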